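/- arXiv:math/0210381 — 2 statements merged into one kernel-verified Lean document; each statement's English description precedes it below -/
import Mathlib

section
/- If I is an ideal containing a regular element in a Noetherian ring R, then for all sufficiently large n, the n-th power of the Ratliff-Rush closure of I equals I^n. -/
/-- The Ratliff–Rush closure of an ideal `I`: the union (supremum) of the increasing
chain of ideals `(I^{n+1} : I^n)` for `n ≥ 0`. -/
noncomputable def ratliffRushClosure {R : Type*} [CommRing R] (I : Ideal R) : Ideal R :=
  ⨆ n : ℕ, Submodule.colon (I ^ (n + 1)) ((I ^ n : Ideal R) : Set R)

/-!
Write `Ĩₙ = ⋃ₖ (I^{n+k} : I^k)` for the Ratliff–Rush closure of `I^n`, so `Ĩ = Ĩ₁`. These ideals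
form an `I`-filtration with `Ĩₐ Ĩ_b ⊆ Ĩ_{a+b}`, so `Ĩ^n ⊆ Ĩₙ`, and it suffices to show `Ĩₙ = I^n`
for `n ≫ 0`. By Artin–Rees the filtration `Ĩ_{j+1} ∩ I^j` is `I`-stable, and since in a Noetherian
ring each `Ĩₙ` is a single colon ideal `(I^{n+k} : I^k)`, this forces `Ĩ_{j+1} ∩ I^j ⊆ I^{j+1}`
for `j ≥ M`, hence `Ĩₙ ∩ I^M ⊆ I^n` for `n ≥ M`. Finally, for a regular `x ∈ I` and `z ∈ Ĩₙ`,
`x^M z ∈ Ĩ_{n+M} ∩ I^M ⊆ I^{n+M}`, and Artin–Rees for the ideal `(x^M)` cancels `x^M` at a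
bounded cost in the exponent, giving `z ∈ I^M` and so `z ∈ I^n`.
-/

namespace Ideal

variable {R : Type*} [CommRing R]

theorem le_colon_iff_mul_le {I J K : Ideal R} : I ≤ J.colon (K : Set R) ↔ I * K ≤ J := by
  rw [Ideal.mul_le]
  simp only [SetLike.le_def, Submodule.mem_colon, smul_eq_mul, SetLike.mem_coe]

theorem colon_mul_le (J K : Ideal R) : J.colon (K : Set R) * K ≤ J :=
  le_colon_iff_mul_le.mp le_rfl

theorem colon_mul_colon_le (J₁ K₁ J₂ K₂ : Ideal R) :
    J₁.colon (K₁ : Set R) * J₂.colon (K₂ : Set R) ≤ (J₁ * J₂).colon (K₁ * K₂ : Ideal R) := by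
  rw [le_colon_iff_mul_le, mul_mul_mul_comm]
  exact mul_le_mul' (colon_mul_le J₁ K₁) (colon_mul_le J₂ K₂)

theorem exists_colon_pow_add_le_pow [IsNoetherianRing R] (I : Ideal R) {y : R}
    (hy : y ∈ nonZeroDivisors R) :
    ∃ c, ∀ s, (I ^ (s + c)).colon {y} ≤ I ^ s := by
  obtain ⟨c, hc⟩ := I.exists_pow_inf_eq_pow_smul (span {y})
  refine ⟨c, fun s z hz => ?_⟩
  have hzy : z * y ∈ I ^ (s + c) • (⊤ : Ideal R) ⊓ span {y} :=
    ⟨by simpa using hz, mem_span_singleton'.mpr ⟨z, rfl⟩⟩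
  rw [hc _ le_add_self, Nat.add_sub_cancel, smul_eq_mul] at hzy
  obtain ⟨a, ha, hay⟩ := mem_mul_span_singleton.mp (mul_mono_right inf_le_right hzy)
  rwa [(mul_cancel_right_mem_nonZeroDivisors hy).mp hay] at ha

def Filtration.shift {I : Ideal R} {M : Type*} [AddCommGroup M] [Module R M]
    (F : I.Filtration M) : I.Filtration M where
  N n := F.N (n + 1)
  mono n := F.mono (n + 1)
  smul_le n := F.smul_le (n + 1)

variable (I : Ideal R)

theorem monotone_colon_pow_add (n : ℕ) :
    Monotone fun k => (I ^ (n + k)).colon ((I ^ k : Ideal R) : Set R) := by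
  refine monotone_nat_of_le_succ fun k => ?_
  rw [le_colon_iff_mul_le, pow_succ, ← mul_assoc, ← add_assoc, pow_succ]
  exact mul_le_mul_left (colon_mul_le _ _) I

/-- `(ratliffRushFiltration I).N n` is the Ratliff–Rush closure `⋃ₖ (I^{n+k} : I^k)` of `I^n`. -/
noncomputable def ratliffRushFiltration : I.Filtration R where
  N n := ⨆ k, (I ^ (n + k)).colon ((I ^ k : Ideal R) : Set R)
  mono n := iSup_mono fun k => Submodule.colon_mono (pow_le_pow_right (by omega)) subset_rfl
  smul_le n := by
    rw [smul_eq_mul, mul_iSup]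
    refine iSup_mono fun k => ?_
    rw [le_colon_iff_mul_le, mul_assoc, add_right_comm, pow_succ']
    exact mul_le_mul_right (colon_mul_le _ _) I

theorem ratliffRushClosure_eq_ratliffRushFiltration_one :
    ratliffRushClosure I = (ratliffRushFiltration I).N 1 := by
  simp only [ratliffRushClosure, ratliffRushFiltration, add_comm 1]

theorem pow_le_ratliffRushFiltration (n : ℕ) : I ^ n ≤ (ratliffRushFiltration I).N n :=
  le_iSup_of_le 0 (by simp)

theorem ratliffRushFiltration_mul_le (a b : ℕ) :
    (ratliffRushFiltration I).N a * (ratliffRushFiltration I).N b ≤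
      (ratliffRushFiltration I).N (a + b) := by
  simp only [ratliffRushFiltration, iSup_mul, mul_iSup]
  refine iSup_le fun k => iSup_le fun l => le_iSup_of_le (l + k) ?_
  calc _ ≤ _ := colon_mul_colon_le _ _ _ _
    _ = _ := by rw [← pow_add, ← pow_add, add_add_add_comm]

theorem pow_ratliffRushClosure_le (n : ℕ) :
    ratliffRushClosure I ^ n ≤ (ratliffRushFiltration I).N n := by
  induction n with
  | zero => exact le_iSup_of_le 0 (by simp [one_eq_top])
  | succ n ih =>
    rw [pow_succ]
    exact (mul_le_mul' ih (ratliffRushClosure_eq_ratliffRushFiltration_one I).le).trans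
      (ratliffRushFiltration_mul_le I n 1)

theorem exists_ratliffRushFiltration_eq_colon [IsNoetherianRing R] (n : ℕ) :
    ∃ k, (ratliffRushFiltration I).N n = (I ^ (n + k)).colon ((I ^ k : Ideal R) : Set R) := by
  let chain : ℕ →o Ideal R := ⟨_, monotone_colon_pow_add I n⟩
  exact ⟨monotonicSequenceLimitIndex chain, WellFoundedGT.iSup_eq_monotonicSequenceLimit chain⟩

theorem exists_ratliffRushFiltration_succ_inf_pow_le [IsNoetherianRing R] :
    ∃ M, ∀ j ≥ M, (ratliffRushFiltration I).N (j + 1) ⊓ I ^ j ≤ I ^ (j + 1) := by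
  let D := (ratliffRushFiltration I).shift ⊓ I.stableFiltration ⊤
  have hD (j : ℕ) : D.N j = (ratliffRushFiltration I).N (j + 1) ⊓ I ^ j := by
    rw [Filtration.inf_N, Pi.inf_apply, stableFiltration_N, smul_eq_mul, mul_top]
    rfl
  obtain ⟨n₀, hn₀⟩ := ((I.stableFiltration_stable ⊤).inter_left _ : D.Stable).exists_pow_smul_eq
  obtain ⟨k, hk⟩ := exists_ratliffRushFiltration_eq_colon I (n₀ + 1)
  have hDk : I ^ k * D.N n₀ ≤ I ^ (n₀ + 1 + k) := by
    rw [mul_comm, ← le_colon_iff_mul_le, ← hk, hD]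
    exact inf_le_left
  refine ⟨n₀ + k, fun j hj => ?_⟩
  obtain ⟨p, rfl⟩ := Nat.exists_eq_add_of_le hj
  calc (ratliffRushFiltration I).N (n₀ + k + p + 1) ⊓ I ^ (n₀ + k + p)
      = I ^ p * (I ^ k * D.N n₀) := by
        rw [← hD, add_assoc, hn₀, smul_eq_mul, ← mul_assoc, ← pow_add, add_comm p]
    _ ≤ I ^ p * I ^ (n₀ + 1 + k) := mul_mono_right hDk
    _ = I ^ (n₀ + k + p + 1) := by rw [← pow_add]; congr 1; omega

theorem exists_ratliffRushFiltration_inf_pow_le [IsNoetherianRing R] :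
    ∃ M, ∀ j n, M ≤ j → j ≤ n → (ratliffRushFiltration I).N n ⊓ I ^ j ≤ I ^ n := by
  obtain ⟨M, hM⟩ := exists_ratliffRushFiltration_succ_inf_pow_le I
  refine ⟨M, fun j n hMj hjn => ?_⟩
  induction n, hjn using Nat.le_induction with
  | base => exact inf_le_right
  | succ n hjn ih =>
    intro z ⟨hz, hzj⟩
    exact hM n (hMj.trans hjn) ⟨hz, ih ⟨(ratliffRushFiltration I).mono n hz, hzj⟩⟩

theorem exists_ratliffRushFiltration_eq_pow [IsNoetherianRing R] {x : R} (hxI : x ∈ I)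
    (hx : x ∈ nonZeroDivisors R) : ∃ N, ∀ n ≥ N, (ratliffRushFiltration I).N n = I ^ n := by
  obtain ⟨M, hM⟩ := exists_ratliffRushFiltration_inf_pow_le I
  obtain ⟨c, hc⟩ := exists_colon_pow_add_le_pow I (pow_mem hx M)
  refine ⟨M + c, fun n hn => le_antisymm (fun z hz => ?_) (pow_le_ratliffRushFiltration I n)⟩
  have hxM : x ^ M ∈ I ^ M := pow_mem_pow hxI M
  have hzx : z * x ^ M ∈ I ^ (n + M - c + c) := by
    rw [Nat.sub_add_cancel (by omega), mul_comm, add_comm]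
    refine hM M (M + n) le_rfl (by omega) ⟨?_, mul_mem_right _ _ hxM⟩
    exact (ratliffRushFiltration I).pow_smul_le M n (Submodule.smul_mem_smul hxM hz)
  have hzM : z ∈ I ^ M :=
    pow_le_pow_right (by omega) (hc _ (Submodule.mem_colon_singleton.mpr hzx))
  exact hM M n le_rfl (by omega) ⟨hz, hzM⟩

end Ideal

/-- If `I` is an ideal containing a regular element in a Noetherian ring `R`, then for all
sufficiently large `n`, the `n`-th power of the Ratliff–Rush closure of `I` equals `I^n`. -/
theorem pow_ratliffRush_eq_pow {R : Type*} [CommRing R] [IsNoetherianRing R]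
    (I : Ideal R) (hreg : ∃ r ∈ I, r ∈ nonZeroDivisors R) :
    ∃ N : ℕ, ∀ n ≥ N, (ratliffRushClosure I) ^ n = I ^ n := by
  obtain ⟨x, hxI, hx⟩ := hreg
  obtain ⟨N, hN⟩ := I.exists_ratliffRushFiltration_eq_pow hxI hx
  refine ⟨N, fun n hn => le_antisymm ?_ (Ideal.pow_right_mono ?_ n)⟩
  · exact (I.pow_ratliffRushClosure_le n).trans (hN n hn).le
  · simpa [Ideal.ratliffRushClosure_eq_ratliffRushFiltration_one] using
      I.pow_le_ratliffRushFiltration 1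
end

section
/- Let (R, m) be a d-dimensional Noetherian local ring with m-primary ideals I, J, and let z_1, ..., z_d ∈ IJ generate a reduction of IJ arising from a complete reduction of (I, J). Then for all a, b ≥ 1, the Ratliff-Rush closure of I^a J^b equals the union over k ≥ 0 of (I^{a+k} J^{b+k} : (z_1^k, ..., z_d^k)). -/
open IsLocalRing

/-! Write `z_i = x_i y_i` and `K = I^a J^b`. If `u K^n ⊆ K^{n+1}`, multiplying
`u x_i^{an} y_i^{bn} ∈ K^{n+1}` by `x_i^{bn} y_i^{an}` gives
`u z_i^{(a+b)n} ∈ I^{a+(a+b)n} J^{b+(a+b)n}`.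
Conversely, suppose `u z_i^k ∈ I^{a+k} J^{b+k}` for all `i`. By pigeonhole,
`(z)^{k+n} ⊆ (z^k) (z)^n` for `n` large, and iterating the reduction equation turns this into
`(IJ)^{k+r} ⊆ (z^k) (IJ)^r`. Since `K = IJ · I^{a-1} J^{b-1}`, this yields
`u K^{k+r} ⊆ K^{k+r+1}`. -/

open Set

theorem pow_add_eq_pow_mul_pow_of_mul_pow_eq {M : Type*} [Monoid M] {z p : M} {N : ℕ}
    (h : ∀ n ≥ N, z * p ^ n = p ^ (n + 1)) (t : ℕ) : p ^ (N + t) = z ^ t * p ^ N := by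
  induction t with
  | zero => simp
  | succ t ih => rw [← add_assoc, ← h _ (Nat.le_add_right N t), ih, pow_succ', mul_assoc]

namespace Ideal

variable {R : Type*} [CommSemiring R]

open Finset in
theorem span_range_pow_add_le {ι : Type*} [Fintype ι] (z : ι → R) {k n : ℕ}
    (h : Fintype.card ι * k < k + n) :
    span (range z) ^ (k + n) ≤ span (range fun i => z i ^ k) * span (range z) ^ n := by
  classical
  rw [span, Submodule.span_pow, ← span, span_le]
  intro r hr
  obtain ⟨f, rfl⟩ := Set.mem_pow.1 hr
  choose g hg using fun j => (f j).2
  obtain ⟨i, -, hi⟩ := exists_lt_card_fiber_of_mul_lt_card_of_maps_to (s := univ) (t := univ)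
    (fun j _ => mem_univ (g j)) (by simpa using h)
  obtain ⟨S, hSi, hS⟩ := exists_subset_card_eq hi.le
  have hprod : (List.ofFn fun j => (f j : R)).prod = z i ^ k * ∏ j ∈ Sᶜ, z (g j) := by
    rw [List.prod_ofFn, ← prod_mul_prod_compl S]
    congr 1
    · rw [prod_congr rfl fun j hj => by rw [← hg, (mem_filter.1 (hSi hj)).2], prod_const, hS]
    · exact prod_congr rfl fun j _ => (hg j).symm
  rw [SetLike.mem_coe, hprod]
  refine mul_mem_mul (subset_span ⟨i, rfl⟩) ?_
  have hrest := prod_mem_prod (s := Sᶜ) (I := fun _ => span (range z))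
    fun j _ => subset_span ⟨g j, rfl⟩
  rwa [prod_const, card_compl, hS, Fintype.card_fin, Nat.add_sub_cancel_left] at hrest

theorem mem_colon_iff_span_singleton_mul_le {A B : Ideal R} {u : R} :
    u ∈ A.colon (B : Set R) ↔ span {u} * B ≤ A := by
  rw [Submodule.mem_colon, span_singleton_mul_le_iff]
  rfl

theorem mem_colon_span_range_iff {ι : Type*} {A : Ideal R} {f : ι → R} {u : R} :
    u ∈ A.colon (span (range f) : Set R) ↔ ∀ i, u * f i ∈ A := by
  rw [colon_span, Submodule.mem_colon, forall_mem_range]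
  rfl

theorem exists_pow_add_le_span_pow_mul_pow {ι : Type*} [Fintype ι] {P : Ideal R} (z : ι → R)
    {N : ℕ} (hred : ∀ n ≥ N, span (range z) * P ^ n = P ^ (n + 1)) (k : ℕ) :
    ∃ r, P ^ (k + r) ≤ span (range fun i => z i ^ k) * P ^ r := by
  have hpow := pow_add_eq_pow_mul_pow_of_mul_pow_eq hred
  set n := Fintype.card ι * k + 1
  refine ⟨N + n, ?_⟩
  calc P ^ (k + (N + n)) = span (range z) ^ (k + n) * P ^ N := by
        rw [← hpow]; ring_nf
    _ ≤ span (range fun i => z i ^ k) * span (range z) ^ n * P ^ N := by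
        gcongr; exact span_range_pow_add_le z (by omega)
    _ = span (range fun i => z i ^ k) * P ^ (N + n) := by rw [hpow]; ring

variable {I J : Ideal R}

theorem mul_pow_mem_of_mem_colon {a b n : ℕ} {x y u : R} (hx : x ∈ I) (hy : y ∈ J)
    (hu : u ∈ ((I ^ a * J ^ b) ^ (n + 1)).colon ((I ^ a * J ^ b) ^ n : Ideal R)) :
    u * (x * y) ^ ((a + b) * n) ∈ I ^ (a + (a + b) * n) * J ^ (b + (a + b) * n) := by
  have hxy : x ^ (a * n) * y ^ (b * n) ∈ (I ^ a * J ^ b) ^ n := by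
    rw [mul_pow, pow_mul, pow_mul]
    exact mul_mem_mul (pow_mem_pow (pow_mem_pow hx a) n) (pow_mem_pow (pow_mem_pow hy b) n)
  have hyx : x ^ (b * n) * y ^ (a * n) ∈ I ^ (b * n) * J ^ (a * n) :=
    mul_mem_mul (pow_mem_pow hx _) (pow_mem_pow hy _)
  have hmem := mul_mem_mul (Submodule.mem_colon.1 hu _ hxy) hyx
  rw [smul_eq_mul] at hmem
  convert hmem using 1 <;> ring

theorem span_singleton_mul_pow_le_pow_succ {a b k r : ℕ} (ha : 1 ≤ a) (hb : 1 ≤ b)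
    {u : R} {Q : Ideal R} (hu : span {u} * Q ≤ I ^ (a + k) * J ^ (b + k))
    (hQ : (I * J) ^ (k + r) ≤ Q * (I * J) ^ r) :
    span {u} * (I ^ a * J ^ b) ^ (k + r) ≤ (I ^ a * J ^ b) ^ (k + r + 1) := by
  obtain ⟨a, rfl⟩ := Nat.exists_eq_add_of_le' ha
  obtain ⟨b, rfl⟩ := Nat.exists_eq_add_of_le' hb
  calc span {u} * (I ^ (a + 1) * J ^ (b + 1)) ^ (k + r)
      = span {u} * (I * J) ^ (k + r) * (I ^ a * J ^ b) ^ (k + r) := by ring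
    _ ≤ span {u} * (Q * (I * J) ^ r) * (I ^ a * J ^ b) ^ (k + r) := by gcongr
    _ = span {u} * Q * ((I * J) ^ r * (I ^ a * J ^ b) ^ (k + r)) := by ring
    _ ≤ I ^ (a + 1 + k) * J ^ (b + 1 + k) * ((I * J) ^ r * (I ^ a * J ^ b) ^ (k + r)) := by
        gcongr
    _ = (I ^ (a + 1) * J ^ (b + 1)) ^ (k + r + 1) := by ring

end Ideal

section RatliffRush

open Ideal

variable {R : Type*} [CommRing R] {I J : Ideal R} {ι : Type*} {x y : ι → R}

theorem ratliffRushClosure_le_iSup_colon (hx : ∀ i, x i ∈ I) (hy : ∀ i, y i ∈ J) (a b : ℕ) :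
    ratliffRushClosure (I ^ a * J ^ b) ≤
      ⨆ k : ℕ, (I ^ (a + k) * J ^ (b + k)).colon (span (range fun i => (x i * y i) ^ k)) := by
  refine iSup_le fun n u hu => Submodule.mem_iSup_of_mem ((a + b) * n) ?_
  exact mem_colon_span_range_iff.2 fun i => mul_pow_mem_of_mem_colon (hx i) (hy i) hu

theorem iSup_colon_le_ratliffRushClosure [Fintype ι] {N : ℕ}
    (hred : ∀ n ≥ N, span (range fun i => x i * y i) * (I * J) ^ n = (I * J) ^ (n + 1))
    {a b : ℕ} (ha : 1 ≤ a) (hb : 1 ≤ b) :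
    ⨆ k : ℕ, (I ^ (a + k) * J ^ (b + k)).colon (span (range fun i => (x i * y i) ^ k)) ≤
      ratliffRushClosure (I ^ a * J ^ b) := by
  refine iSup_le fun k u hu => ?_
  obtain ⟨r, hr⟩ := exists_pow_add_le_span_pow_mul_pow _ hred k
  refine Submodule.mem_iSup_of_mem (k + r) (mem_colon_iff_span_singleton_mul_le.2 ?_)
  exact span_singleton_mul_pow_le_pow_succ ha hb (mem_colon_iff_span_singleton_mul_le.1 hu) hr

end RatliffRush

theorem ratliffRush_eq_iSup_colon_completeReduction_general {R : Type*} [CommRing R]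
    (d : ℕ)
    (I J : Ideal R)
    (x y : Fin d → R) (hx : ∀ i, x i ∈ I) (hy : ∀ i, y i ∈ J)
    (hred : ∃ N : ℕ, ∀ n ≥ N,
      Ideal.span (Set.range fun i => x i * y i) * (I * J) ^ n = (I * J) ^ (n + 1)) :
    ∀ a b : ℕ, 1 ≤ a → 1 ≤ b →
      ratliffRushClosure (I ^ a * J ^ b) =
        ⨆ k : ℕ, Submodule.colon (I ^ (a + k) * J ^ (b + k))
          (Ideal.span (Set.range fun i => (x i * y i) ^ k)) := by
  obtain ⟨N, hN⟩ := hred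
  exact fun a b ha hb => le_antisymm (ratliffRushClosure_le_iSup_colon hx hy a b)
    (iSup_colon_le_ratliffRushClosure hN ha hb)

/-- Let `(R, m)` be a `d`-dimensional Noetherian local ring with infinite residue field and
`m`-primary ideals `I, J`, and let `z_i = x_i y_i` (with `x_i ∈ I`, `y_i ∈ J`) generate a
reduction of `IJ`, i.e. `(z_1, …, z_d)` arises from a complete reduction of `(I, J)`.
Then for all `a, b ≥ 1`, the Ratliff–Rush closure of `I^a J^b` equals the union over `k ≥ 0`
of `(I^{a+k} J^{b+k} : (z_1^k, …, z_d^k))`. -/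
theorem ratliffRush_eq_iSup_colon_completeReduction {R : Type*} [CommRing R]
    [IsNoetherianRing R] [IsLocalRing R] [Infinite (ResidueField R)]
    (d : ℕ) (hdim : ringKrullDim R = d)
    (I J : Ideal R) (hI : I.radical = maximalIdeal R) (hJ : J.radical = maximalIdeal R)
    (x y : Fin d → R) (hx : ∀ i, x i ∈ I) (hy : ∀ i, y i ∈ J)
    (hred : ∃ N : ℕ, ∀ n ≥ N,
      Ideal.span (Set.range fun i => x i * y i) * (I * J) ^ n = (I * J) ^ (n + 1)) :
    ∀ a b : ℕ, 1 ≤ a → 1 ≤ b →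
      ratliffRushClosure (I ^ a * J ^ b) =
        ⨆ k : ℕ, Submodule.colon (I ^ (a + k) * J ^ (b + k))
          (Ideal.span (Set.range fun i => (x i * y i) ^ k)) :=
  ratliffRush_eq_iSup_colon_completeReduction_general d I J x y hx hy hred
end
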